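/- arXiv:2102.06296 — 3 statements merged into one kernel-verified Lean document; each statement's English description precedes it below -/
import Mathlib

section
/- Let x₁,…,x_t ∈ ℝⁿ with ‖x_s‖ ≤ 1 for all s, λ > 0, and V = λI + Σ_{s=1}^{t} x_s x_sᵀ. Then for any subset of indices S ⊆ {1,…,t}, the operator norm of V⁻¹ (Σ_{s∈S} x_s x_sᵀ) is at most (1/√λ) Σ_{s∈S} ‖x_s‖_{V⁻¹}, where ‖x‖_{V⁻¹} = √(xᵀV⁻¹x). -/
/-!
With `w_s = V⁻¹ x_s`, the matrix applied to `z` is `∑_{s ∈ S} ⟪x_s, z⟫ w_s`. By the triangle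
inequality and Cauchy–Schwarz (`‖x_s‖ ≤ 1`) its norm is at most `‖z‖ ∑_{s ∈ S} ‖w_s‖`, and since
`V ≥ λ I`, `λ ‖w_s‖² ≤ w_sᵀ V w_s = x_sᵀ V⁻¹ x_s`.
-/

open Matrix Finset

noncomputable def enorm5 {n : ℕ} (v : Fin n → ℝ) : ℝ := Real.sqrt (v ⬝ᵥ v)

theorem enorm5_eq_norm {n : ℕ} (v : Fin n → ℝ) :
    enorm5 v = ‖(WithLp.toLp 2 v : EuclideanSpace ℝ (Fin n))‖ := by
  rw [norm_eq_sqrt_real_inner, EuclideanSpace.inner_toLp_toLp, star_trivial, enorm5]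

theorem enorm5_nonneg {n : ℕ} (v : Fin n → ℝ) : 0 ≤ enorm5 v := Real.sqrt_nonneg _

theorem abs_dotProduct_le_enorm5_mul {n : ℕ} (u v : Fin n → ℝ) :
    |u ⬝ᵥ v| ≤ enorm5 u * enorm5 v := by
  simpa [enorm5_eq_norm, EuclideanSpace.inner_toLp_toLp, dotProduct_comm] using
    abs_real_inner_le_norm (WithLp.toLp 2 u : EuclideanSpace ℝ (Fin n)) (WithLp.toLp 2 v)

theorem enorm5_sum_smul_le {n : ℕ} {ι : Type*} (S : Finset ι) (c : ι → ℝ) (v : ι → Fin n → ℝ) :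
    enorm5 (∑ i ∈ S, c i • v i) ≤ ∑ i ∈ S, |c i| * enorm5 (v i) := by
  simp only [enorm5_eq_norm, WithLp.toLp_sum, WithLp.toLp_smul]
  refine (norm_sum_le _ _).trans_eq ?_
  simp [norm_smul]

theorem sum_vecMulVec_self_mulVec {m ι : Type*} [Fintype m] (S : Finset ι) (x : ι → m → ℝ)
    (z : m → ℝ) :
    (∑ s ∈ S, vecMulVec (x s) (x s)) *ᵥ z = ∑ s ∈ S, (x s ⬝ᵥ z) • x s := by
  simp [sum_mulVec, vecMulVec_mulVec]

theorem mul_dotProduct_self_le {m : Type*} [Fintype m] [DecidableEq m] {l : ℝ}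
    {P : Matrix m m ℝ} (hP : P.PosSemidef) (w : m → ℝ) :
    l * (w ⬝ᵥ w) ≤ w ⬝ᵥ ((l • 1 + P) *ᵥ w) := by
  have := hP.dotProduct_mulVec_nonneg w
  simp only [star_trivial] at this
  rw [add_mulVec, dotProduct_add, smul_mulVec, one_mulVec, dotProduct_smul, smul_eq_mul]
  linarith

theorem posSemidef_sum_vecMulVec_self {m ι : Type*} [Fintype m] (S : Finset ι) (x : ι → m → ℝ) :
    (∑ s ∈ S, vecMulVec (x s) (x s)).PosSemidef :=
  posSemidef_sum S fun s _ => by simpa using posSemidef_vecMulVec_self_star (x s)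

theorem posDef_smul_one_add {m : Type*} [Fintype m] [DecidableEq m] {l : ℝ} (hl : 0 < l)
    {P : Matrix m m ℝ} (hP : P.PosSemidef) : (l • 1 + P).PosDef :=
  (PosDef.one.smul hl).add_posSemidef hP

theorem mul_dotProduct_inv_mulVec_le {m : Type*} [Fintype m] [DecidableEq m] {l : ℝ} (hl : 0 < l)
    {P : Matrix m m ℝ} (hP : P.PosSemidef) (x : m → ℝ) :
    l * ((l • 1 + P)⁻¹ *ᵥ x ⬝ᵥ (l • 1 + P)⁻¹ *ᵥ x) ≤ x ⬝ᵥ ((l • 1 + P)⁻¹ *ᵥ x) := by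
  have hV : IsUnit (l • 1 + P).det :=
    (isUnit_iff_isUnit_det _).mp (posDef_smul_one_add hl hP).isUnit
  set w := (l • 1 + P)⁻¹ *ᵥ x
  have hx : (l • 1 + P) *ᵥ w = x := by simp [w, mulVec_mulVec, mul_nonsing_inv _ hV]
  calc l * (w ⬝ᵥ w) ≤ w ⬝ᵥ ((l • 1 + P) *ᵥ w) := mul_dotProduct_self_le hP w
    _ = x ⬝ᵥ w := by rw [hx, dotProduct_comm]

theorem enorm5_inv_mulVec_le {n : ℕ} {l : ℝ} (hl : 0 < l)
    {P : Matrix (Fin n) (Fin n) ℝ} (hP : P.PosSemidef) (x : Fin n → ℝ) :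
    enorm5 ((l • 1 + P)⁻¹ *ᵥ x) ≤ 1 / √l * √(x ⬝ᵥ ((l • 1 + P)⁻¹ *ᵥ x)) := by
  rw [one_div_mul_eq_div, ← Real.sqrt_div' _ hl.le, enorm5]
  refine Real.sqrt_le_sqrt ?_
  rw [le_div_iff₀ hl, mul_comm]
  exact mul_dotProduct_inv_mulVec_le hl hP x

theorem stmt_5 {n t : ℕ} (x : Fin t → Fin n → ℝ) (hx : ∀ s, enorm5 (x s) ≤ 1)
    (l : ℝ) (hl : 0 < l)
    (V : Matrix (Fin n) (Fin n) ℝ)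
    (hV : V = l • (1 : Matrix (Fin n) (Fin n) ℝ) + ∑ s, vecMulVec (x s) (x s))
    (S : Finset (Fin t)) :
    ∀ z : Fin n → ℝ,
      enorm5 ((V⁻¹ * ∑ s ∈ S, vecMulVec (x s) (x s)) *ᵥ z) ≤
        ((1 / Real.sqrt l) * ∑ s ∈ S, Real.sqrt (x s ⬝ᵥ (V⁻¹ *ᵥ x s))) * enorm5 z := by
  intro z
  have hxz : ∀ s, |x s ⬝ᵥ z| ≤ enorm5 z := fun s =>
    (abs_dotProduct_le_enorm5_mul _ _).trans
      (mul_le_of_le_one_left (enorm5_nonneg z) (hx s))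
  have hVx : ∀ s, enorm5 (V⁻¹ *ᵥ x s) ≤ 1 / √l * √(x s ⬝ᵥ (V⁻¹ *ᵥ x s)) := fun s => by
    rw [hV]; exact enorm5_inv_mulVec_le hl (posSemidef_sum_vecMulVec_self _ x) (x s)
  rw [← mulVec_mulVec, sum_vecMulVec_self_mulVec, mulVec_sum]
  simp only [mulVec_smul]
  calc enorm5 (∑ s ∈ S, (x s ⬝ᵥ z) • V⁻¹ *ᵥ x s)
      ≤ ∑ s ∈ S, |x s ⬝ᵥ z| * enorm5 (V⁻¹ *ᵥ x s) := enorm5_sum_smul_le _ _ _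
    _ ≤ ∑ s ∈ S, enorm5 z * (1 / √l * √(x s ⬝ᵥ (V⁻¹ *ᵥ x s))) :=
        sum_le_sum fun s _ => mul_le_mul (hxz s) (hVx s) (enorm5_nonneg _) (enorm5_nonneg z)
    _ = _ := by rw [← mul_sum, ← mul_sum, mul_comm]
end

section
/- Let φ(x_{t₀}),…,φ(x_{t−1}) ∈ ℝⁿ with ‖φ(x_s)‖ ≤ 1, λ > 0, V = λI + Σ_{s=t₀}^{t−1} φ(x_s)φ(x_s)ᵀ, and let θ_{t₀},…,θ_t ∈ ℝⁿ. Suppose C > 0 is such that ‖V⁻¹ Σ_{s=t₀}^{p} φ(x_s)φ(x_s)ᵀ‖_op ≤ C for every t₀ ≤ p ≤ t−1. Then for every x with ‖x‖ ≤ 1, |xᵀ V⁻¹ Σ_{s=t₀}^{t−1} φ(x_s)φ(x_s)ᵀ(θ_s − θ_t)| ≤ C · Σ_{p=t₀}^{t−1} ‖θ_p − θ_{p+1}‖. -/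
/-! Abel summation: writing θ s - θ t as the telescoping sum of the increments θ p - θ (p + 1),
s ≤ p < t, and exchanging the two sums turns ∑_s φ s φ sᵀ (θ s - θ t) into the sum over p of the
partial Gram sums ∑_{s ≤ p} φ s φ sᵀ applied to the increment at p. After V⁻¹ each term is controlled by
Cauchy–Schwarz and the uniform operator bound on V⁻¹ times the partial sums. -/

open Matrix Finset

noncomputable def enorm8 {n : ℕ} (v : Fin n → ℝ) : ℝ := Real.sqrt (v ⬝ᵥ v)

lemma enorm8_eq_norm {n : ℕ} (v : Fin n → ℝ) :
    enorm8 v = ‖(WithLp.toLp 2 v : EuclideanSpace ℝ (Fin n))‖ := by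
  rw [EuclideanSpace.norm_eq, enorm8, dotProduct]
  simp [sq]

lemma abs_dotProduct_le_enorm8_mul {n : ℕ} (x y : Fin n → ℝ) :
    |x ⬝ᵥ y| ≤ enorm8 x * enorm8 y := by
  rw [enorm8_eq_norm, enorm8_eq_norm, mul_comm]
  exact abs_real_inner_le_norm (WithLp.toLp 2 y) (WithLp.toLp 2 x)

lemma sum_mulVec_sub_eq_sum_partialSum_mulVec {m k R : Type*} [Fintype k] [Ring R]
    (A : ℕ → Matrix m k R) (θ : ℕ → k → R) (a b : ℕ) :
    ∑ s ∈ Icc a b, A s *ᵥ (θ s - θ (b + 1)) =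
      ∑ p ∈ Icc a b, (∑ s ∈ Icc a p, A s) *ᵥ (θ p - θ (p + 1)) := by
  have telescope : ∀ s ∈ Icc a b, θ s - θ (b + 1) = ∑ p ∈ Icc s b, (θ p - θ (p + 1)) := by
    intro s hs
    rw [← neg_sub, ← sum_Icc_sub (mem_Icc.1 hs).2 θ, ← sum_neg_distrib]
    simp only [neg_sub]
  calc ∑ s ∈ Icc a b, A s *ᵥ (θ s - θ (b + 1))
      = ∑ s ∈ Icc a b, ∑ p ∈ Icc s b, A s *ᵥ (θ p - θ (p + 1)) :=
        sum_congr rfl fun s hs => by rw [telescope s hs, mulVec_sum]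
    _ = ∑ p ∈ Icc a b, ∑ s ∈ Icc a p, A s *ᵥ (θ p - θ (p + 1)) :=
        sum_comm' fun s p => by simp only [mem_Icc]; omega
    _ = ∑ p ∈ Icc a b, (∑ s ∈ Icc a p, A s) *ᵥ (θ p - θ (p + 1)) := by
        simp only [sum_mulVec]

lemma abs_dotProduct_mulVec_le_of_enorm8_le_one {n : ℕ} {x : Fin n → ℝ} (hx : enorm8 x ≤ 1)
    {M : Matrix (Fin n) (Fin n) ℝ} {C : ℝ} (hM : ∀ z, enorm8 (M *ᵥ z) ≤ C * enorm8 z)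
    (z : Fin n → ℝ) : |x ⬝ᵥ M *ᵥ z| ≤ C * enorm8 z :=
  calc |x ⬝ᵥ M *ᵥ z| ≤ enorm8 x * enorm8 (M *ᵥ z) := abs_dotProduct_le_enorm8_mul _ _
    _ ≤ 1 * (C * enorm8 z) := mul_le_mul hx (hM z) (Real.sqrt_nonneg _) zero_le_one
    _ = C * enorm8 z := one_mul _

theorem stmt_8_general {n : ℕ} (t₀ t : ℕ) (h1 : 1 ≤ t₀) (h2 : t₀ ≤ t - 1)
    (φ : ℕ → Fin n → ℝ)
    (V : Matrix (Fin n) (Fin n) ℝ)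
    (θ : ℕ → Fin n → ℝ)
    (C : ℝ)
    (hop : ∀ p ∈ Finset.Icc t₀ (t - 1), ∀ z : Fin n → ℝ,
      enorm8 ((V⁻¹ * ∑ s ∈ Finset.Icc t₀ p, vecMulVec (φ s) (φ s)) *ᵥ z) ≤ C * enorm8 z) :
    ∀ x : Fin n → ℝ, enorm8 x ≤ 1 →
      |x ⬝ᵥ (V⁻¹ *ᵥ (∑ s ∈ Finset.Icc t₀ (t - 1), vecMulVec (φ s) (φ s) *ᵥ (θ s - θ t)))| ≤
        C * ∑ p ∈ Finset.Icc t₀ (t - 1), enorm8 (θ p - θ (p + 1)) := by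
  intro x hx
  obtain ⟨T, rfl⟩ : ∃ T, t = T + 1 := ⟨t - 1, by omega⟩
  simp only [Nat.add_sub_cancel] at hop ⊢
  rw [sum_mulVec_sub_eq_sum_partialSum_mulVec, mulVec_sum, dotProduct_sum, mul_sum]
  refine (abs_sum_le_sum_abs _ _).trans (sum_le_sum fun p hp => ?_)
  rw [mulVec_mulVec]
  exact abs_dotProduct_mulVec_le_of_enorm8_le_one hx (hop p hp) _

theorem stmt_8 {n : ℕ} (t₀ t : ℕ) (h1 : 1 ≤ t₀) (h2 : t₀ ≤ t - 1)
    (φ : ℕ → Fin n → ℝ) (hφ : ∀ s, enorm8 (φ s) ≤ 1)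
    (l : ℝ) (hl : 0 < l)
    (V : Matrix (Fin n) (Fin n) ℝ)
    (hV : V = l • (1 : Matrix (Fin n) (Fin n) ℝ) +
      ∑ s ∈ Finset.Icc t₀ (t - 1), vecMulVec (φ s) (φ s))
    (θ : ℕ → Fin n → ℝ)
    (C : ℝ) (hC : 0 < C)
    (hop : ∀ p ∈ Finset.Icc t₀ (t - 1), ∀ z : Fin n → ℝ,
      enorm8 ((V⁻¹ * ∑ s ∈ Finset.Icc t₀ p, vecMulVec (φ s) (φ s)) *ᵥ z) ≤ C * enorm8 z) :
    ∀ x : Fin n → ℝ, enorm8 x ≤ 1 →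
      |x ⬝ᵥ (V⁻¹ *ᵥ (∑ s ∈ Finset.Icc t₀ (t - 1), vecMulVec (φ s) (φ s) *ᵥ (θ s - θ t)))| ≤
        C * ∑ p ∈ Finset.Icc t₀ (t - 1), enorm8 (θ p - θ (p + 1)) :=
  stmt_8_general t₀ t h1 h2 φ V θ C hop
end

section
/- Let x₁,…,x_H ∈ ℝⁿ with ‖x_s‖ ≤ 1, λ ≥ 1, and V_s = λI + Σ_{u=1}^{s} x_u x_uᵀ. Then Σ_{s=1}^{H} min(1, x_sᵀ V_{s−1}⁻¹ x_s) ≤ 2 ln det(I + (1/λ) Σ_{s=1}^{H} x_s x_sᵀ). -/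
/-! By the matrix determinant lemma, each rank-one update multiplies the determinant by
`1 + q_s`, where `q_s = x_sᵀ V_{s-1}⁻¹ x_s ≥ 0`, so `∑ log (1 + q_s) = log (det V_H / det V_0)`;
and `min 1 q ≤ 2 log (1 + q)` for every `q ≥ 0`. -/

open Matrix Finset

noncomputable def enorm15 {n : ℕ} (v : Fin n → ℝ) : ℝ := Real.sqrt (v ⬝ᵥ v)

lemma Real.min_one_le_two_mul_log_one_add {q : ℝ} (hq : 0 ≤ q) :
    min 1 q ≤ 2 * Real.log (1 + q) := by
  have hpos : 0 < 1 + q := by linarith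
  -- `log (1 + q) ≥ 1 - (1 + q)⁻¹ = q / (1 + q)`, from `log y ≤ y - 1` at `y = (1 + q)⁻¹`
  have hlog : 1 - (1 + q)⁻¹ ≤ Real.log (1 + q) := by
    have := Real.log_le_sub_one_of_pos (inv_pos.mpr hpos)
    rw [Real.log_inv] at this
    linarith
  have hinv : (1 + q) * (1 + q)⁻¹ = 1 := mul_inv_cancel₀ hpos.ne'
  have key : min 1 q ≤ 2 * (1 - (1 + q)⁻¹) := by
    rcases le_total q 1 with hq1 | hq1
    · rw [min_eq_right hq1]; nlinarith
    · rw [min_eq_left hq1]; nlinarith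
  linarith

section RankOneUpdates

variable {m : Type*} [Fintype m]

theorem Matrix.PosDef.of_rank_one_updates {V : ℕ → Matrix m m ℝ} {x : ℕ → m → ℝ}
    (hV0 : (V 0).PosDef) (hV : ∀ k, V (k + 1) = V k + vecMulVec (x (k + 1)) (x (k + 1)))
    (k : ℕ) : (V k).PosDef := by
  induction k with
  | zero => exact hV0
  | succ k ih =>
    rw [hV]
    simpa using ih.add_posSemidef (posSemidef_vecMulVec_self_star (x (k + 1)))

variable [DecidableEq m]

theorem Matrix.det_add_vecMulVec {R : Type*} [CommRing R] {A : Matrix m m R}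
    (hA : IsUnit A.det) (u v : m → R) :
    (A + vecMulVec u v).det = A.det * (1 + v ⬝ᵥ (A⁻¹ *ᵥ u)) := by
  rw [vecMulVec_eq Unit, det_add_replicateCol_mul_replicateRow hA]
  congr 1
  rw [det_unique, Matrix.mul_assoc, ← replicateCol_mulVec]
  simp [replicateRow_mul_replicateCol_apply]

theorem Matrix.det_eq_mul_prod_of_rank_one_updates {R : Type*} [CommRing R]
    {V : ℕ → Matrix m m R} {x : ℕ → m → R} (hunit : ∀ k, IsUnit (V k).det)
    (hV : ∀ k, V (k + 1) = V k + vecMulVec (x (k + 1)) (x (k + 1))) (K : ℕ) :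
    (V K).det = (V 0).det * ∏ s ∈ Icc 1 K, (1 + x s ⬝ᵥ ((V (s - 1))⁻¹ *ᵥ x s)) := by
  induction K with
  | zero => simp
  | succ k ih =>
    rw [prod_Icc_succ_top (by omega), ← mul_assoc, ← ih, hV, det_add_vecMulVec (hunit k),
      Nat.add_sub_cancel]

/-- The elliptical potential lemma. -/
theorem Matrix.sum_min_one_le_two_mul_log_det_div {V : ℕ → Matrix m m ℝ} {x : ℕ → m → ℝ}
    (hV0 : (V 0).PosDef) (hV : ∀ k, V (k + 1) = V k + vecMulVec (x (k + 1)) (x (k + 1)))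
    (H : ℕ) :
    ∑ s ∈ Icc 1 H, min 1 (x s ⬝ᵥ ((V (s - 1))⁻¹ *ᵥ x s)) ≤
      2 * Real.log ((V H).det / (V 0).det) := by
  have hpd := PosDef.of_rank_one_updates hV0 hV
  have hq : ∀ s, 0 ≤ x s ⬝ᵥ ((V (s - 1))⁻¹ *ᵥ x s) := fun s => by
    simpa using (hpd (s - 1)).inv.posSemidef.dotProduct_mulVec_nonneg (x s)
  have hdet : (V H).det / (V 0).det = ∏ s ∈ Icc 1 H, (1 + x s ⬝ᵥ ((V (s - 1))⁻¹ *ᵥ x s)) := by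
    rw [det_eq_mul_prod_of_rank_one_updates (fun k => (hpd k).det_pos.ne'.isUnit) hV,
      mul_div_cancel_left₀ _ hV0.det_pos.ne']
  rw [hdet, Real.log_prod fun s _ => by linarith [hq s], mul_sum]
  exact sum_le_sum fun s _ => Real.min_one_le_two_mul_log_one_add (hq s)

end RankOneUpdates

theorem stmt_15_general {n : ℕ} (H : ℕ) (x : ℕ → Fin n → ℝ)
    (l : ℝ) (hl : 1 ≤ l)
    (V : ℕ → Matrix (Fin n) (Fin n) ℝ)
    (hV : ∀ s, V s = l • (1 : Matrix (Fin n) (Fin n) ℝ) +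
      ∑ u ∈ Finset.Icc 1 s, vecMulVec (x u) (x u)) :
    ∑ s ∈ Finset.Icc 1 H, min 1 (x s ⬝ᵥ ((V (s - 1))⁻¹ *ᵥ x s)) ≤
      2 * Real.log
        ((1 : Matrix (Fin n) (Fin n) ℝ)
          + (1 / l) • ∑ s ∈ Finset.Icc 1 H, vecMulVec (x s) (x s)).det := by
  have hl0 : 0 < l := by linarith
  have hV0 : V 0 = l • 1 := by simp [hV]
  have hstep : ∀ k, V (k + 1) = V k + vecMulVec (x (k + 1)) (x (k + 1)) := fun k => by
    rw [hV, hV, sum_Icc_succ_top (by omega), add_assoc]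
  have hVH : V H = l • (1 + (1 / l) • ∑ s ∈ Icc 1 H, vecMulVec (x s) (x s)) := by
    rw [hV, smul_add, smul_smul, mul_one_div_cancel hl0.ne', one_smul]
  have hpd : (V 0).PosDef := hV0 ▸ PosDef.one.smul hl0
  have hdet := sum_min_one_le_two_mul_log_det_div hpd hstep H
  rwa [hVH, hV0, det_smul, det_smul, det_one, mul_one,
    mul_div_cancel_left₀ _ (pow_pos hl0 _).ne'] at hdet

theorem stmt_15 {n : ℕ} (H : ℕ) (x : ℕ → Fin n → ℝ) (hx : ∀ s, enorm15 (x s) ≤ 1)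
    (l : ℝ) (hl : 1 ≤ l)
    (V : ℕ → Matrix (Fin n) (Fin n) ℝ)
    (hV : ∀ s, V s = l • (1 : Matrix (Fin n) (Fin n) ℝ) +
      ∑ u ∈ Finset.Icc 1 s, vecMulVec (x u) (x u)) :
    ∑ s ∈ Finset.Icc 1 H, min 1 (x s ⬝ᵥ ((V (s - 1))⁻¹ *ᵥ x s)) ≤
      2 * Real.log
        ((1 : Matrix (Fin n) (Fin n) ℝ)
          + (1 / l) • ∑ s ∈ Finset.Icc 1 H, vecMulVec (x s) (x s)).det :=
  stmt_15_general H x l hl V hV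
end
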